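/- Let m₁, m₂ ∈ ℝ³ with ‖m₁‖ = ‖m₂‖ = 1 and let G₁, G₂ be 3×3 real matrices. Then |((m₁⊗m₁)G₁ − (m₂⊗m₂)G₂) : (G₁ − G₂)| ≤ 2‖G₁‖_F ‖m₁ − m₂‖ ‖G₁ − G₂‖_F + ‖G₁ − G₂‖_F². -/
import Mathlib

noncomputable section
open scoped BigOperators

/-- Euclidean dot product on ℝ³. -/
def dot3 (a b : Fin 3 → ℝ) : ℝ := ∑ i, a i * b i

/-- Euclidean norm on ℝ³. -/
def norm3 (a : Fin 3 → ℝ) : ℝ := Real.sqrt (dot3 a a)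

/-- Cross product on ℝ³. -/
def cross3 (a b : Fin 3 → ℝ) : Fin 3 → ℝ :=
  ![a 1 * b 2 - a 2 * b 1, a 2 * b 0 - a 0 * b 2, a 0 * b 1 - a 1 * b 0]

/-- Frobenius inner product of 3×3 real matrices. -/
def mdot (A B : Matrix (Fin 3) (Fin 3) ℝ) : ℝ := ∑ i, ∑ j, A i j * B i j

/-- Frobenius norm of a 3×3 real matrix. -/
def fnorm (A : Matrix (Fin 3) (Fin 3) ℝ) : ℝ := Real.sqrt (mdot A A)

lemma dot3_self_nonneg (a : Fin 3 → ℝ) : 0 ≤ dot3 a a :=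
  Finset.sum_nonneg fun i _ => mul_self_nonneg _

lemma norm3_nonneg (a : Fin 3 → ℝ) : 0 ≤ norm3 a := Real.sqrt_nonneg _

lemma fnorm_nonneg (A : Matrix (Fin 3) (Fin 3) ℝ) : 0 ≤ fnorm A := Real.sqrt_nonneg _

lemma sq_norm3 (a : Fin 3 → ℝ) : norm3 a ^ 2 = dot3 a a :=
  Real.sq_sqrt (dot3_self_nonneg a)

lemma mdot_self_nonneg (A : Matrix (Fin 3) (Fin 3) ℝ) : 0 ≤ mdot A A :=
  Finset.sum_nonneg fun i _ => Finset.sum_nonneg fun j _ => mul_self_nonneg _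

lemma sq_fnorm (A : Matrix (Fin 3) (Fin 3) ℝ) : fnorm A ^ 2 = mdot A A :=
  Real.sq_sqrt (mdot_self_nonneg A)

/-- Cauchy–Schwarz for `dot3`. -/
lemma abs_dot3_le (a b : Fin 3 → ℝ) : |dot3 a b| ≤ norm3 a * norm3 b := by
  have hsq : (dot3 a b) ^ 2 ≤ dot3 a a * dot3 b b := by
    have h := Finset.sum_mul_sq_le_sq_mul_sq Finset.univ a b
    have e : ∀ c : Fin 3 → ℝ, (∑ i, c i * c i) = ∑ i, c i ^ 2 := by
      intro c; apply Finset.sum_congr rfl; intro i _; ring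
    simpa [dot3, e a, e b] using h
  calc |dot3 a b| = Real.sqrt ((dot3 a b) ^ 2) := (Real.sqrt_sq_eq_abs _).symm
    _ ≤ Real.sqrt (dot3 a a * dot3 b b) := Real.sqrt_le_sqrt hsq
    _ = norm3 a * norm3 b := by rw [Real.sqrt_mul (dot3_self_nonneg a)]; rfl

/-- The row vector `aᵀM`. -/
def rowMul (a : Fin 3 → ℝ) (M : Matrix (Fin 3) (Fin 3) ℝ) : Fin 3 → ℝ :=
  fun j => ∑ i, a i * M i j

lemma norm3_rowMul_le (a : Fin 3 → ℝ) (M : Matrix (Fin 3) (Fin 3) ℝ) :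
    norm3 (rowMul a M) ≤ norm3 a * fnorm M := by
  have key : ∀ j : Fin 3, (∑ i, a i * M i j) * (∑ i, a i * M i j)
      ≤ (∑ i, a i * a i) * ∑ i, M i j * M i j := by
    intro j
    have h := Finset.sum_mul_sq_le_sq_mul_sq Finset.univ a (fun i => M i j)
    have e : ∀ c : Fin 3 → ℝ, (∑ i, c i * c i) = ∑ i, c i ^ 2 := by
      intro c; apply Finset.sum_congr rfl; intro i _; ring
    calc (∑ i, a i * M i j) * (∑ i, a i * M i j) = (∑ i, a i * M i j) ^ 2 := by ring
      _ ≤ (∑ i, a i ^ 2) * ∑ i, (M i j) ^ 2 := h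
      _ = (∑ i, a i * a i) * ∑ i, M i j * M i j := by rw [e a, e (fun i => M i j)]
  have hsq : dot3 (rowMul a M) (rowMul a M) ≤ dot3 a a * mdot M M := by
    calc dot3 (rowMul a M) (rowMul a M)
        = ∑ j, (∑ i, a i * M i j) * (∑ i, a i * M i j) := rfl
      _ ≤ ∑ j, (∑ i, a i * a i) * ∑ i, M i j * M i j :=
          Finset.sum_le_sum fun j _ => key j
      _ = dot3 a a * mdot M M := by
          rw [← Finset.mul_sum, mdot, Finset.sum_comm]; rfl
  calc norm3 (rowMul a M) ≤ Real.sqrt (dot3 a a * mdot M M) := Real.sqrt_le_sqrt hsq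
    _ = norm3 a * fnorm M := by rw [Real.sqrt_mul (dot3_self_nonneg a)]; rfl

/-- pointwise estimate on the difference of anisotropic diffusion
terms. -/
theorem anisotropic_difference_pointwise_bound
    (m₁ m₂ : Fin 3 → ℝ) (hm₁ : norm3 m₁ = 1) (hm₂ : norm3 m₂ = 1)
    (G₁ G₂ : Matrix (Fin 3) (Fin 3) ℝ) :
    |mdot (Matrix.vecMulVec m₁ m₁ * G₁ - Matrix.vecMulVec m₂ m₂ * G₂) (G₁ - G₂)|
      ≤ 2 * fnorm G₁ * norm3 (m₁ - m₂) * fnorm (G₁ - G₂) + fnorm (G₁ - G₂) ^ 2 := by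
  set D := G₁ - G₂ with hD
  have key : mdot (Matrix.vecMulVec m₁ m₁ * G₁ - Matrix.vecMulVec m₂ m₂ * G₂) D
      = dot3 (rowMul (m₁ - m₂) G₁) (rowMul m₁ D)
        + dot3 (rowMul m₂ G₁) (rowMul (m₁ - m₂) D)
        + dot3 (rowMul m₂ D) (rowMul m₂ D) := by
    simp only [hD, mdot, dot3, rowMul, Matrix.sub_apply, Matrix.mul_apply,
      Matrix.vecMulVec_apply, Pi.sub_apply, Fin.sum_univ_three]
    ring
  rw [key]
  have hCS1 : |dot3 (rowMul (m₁ - m₂) G₁) (rowMul m₁ D)|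
      ≤ (norm3 (m₁ - m₂) * fnorm G₁) * (norm3 m₁ * fnorm D) := by
    refine (abs_dot3_le _ _).trans ?_
    exact mul_le_mul (norm3_rowMul_le _ _) (norm3_rowMul_le _ _) (norm3_nonneg _)
      (mul_nonneg (norm3_nonneg _) (fnorm_nonneg _))
  have hCS2 : |dot3 (rowMul m₂ G₁) (rowMul (m₁ - m₂) D)|
      ≤ (norm3 m₂ * fnorm G₁) * (norm3 (m₁ - m₂) * fnorm D) := by
    refine (abs_dot3_le _ _).trans ?_
    exact mul_le_mul (norm3_rowMul_le _ _) (norm3_rowMul_le _ _) (norm3_nonneg _)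
      (mul_nonneg (norm3_nonneg _) (fnorm_nonneg _))
  have hCS3 : dot3 (rowMul m₂ D) (rowMul m₂ D) ≤ fnorm D ^ 2 := by
    have h := norm3_rowMul_le m₂ D
    rw [hm₂, one_mul] at h
    have := sq_norm3 (rowMul m₂ D)
    nlinarith [norm3_nonneg (rowMul m₂ D), fnorm_nonneg D]
  have h3nn : 0 ≤ dot3 (rowMul m₂ D) (rowMul m₂ D) := dot3_self_nonneg _
  rw [hm₁, one_mul] at hCS1
  rw [hm₂, one_mul] at hCS2
  calc |dot3 (rowMul (m₁ - m₂) G₁) (rowMul m₁ D)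
        + dot3 (rowMul m₂ G₁) (rowMul (m₁ - m₂) D)
        + dot3 (rowMul m₂ D) (rowMul m₂ D)|
      ≤ |dot3 (rowMul (m₁ - m₂) G₁) (rowMul m₁ D)|
        + |dot3 (rowMul m₂ G₁) (rowMul (m₁ - m₂) D)|
        + |dot3 (rowMul m₂ D) (rowMul m₂ D)| := by
        exact (abs_add_le _ _).trans (by gcongr; exact abs_add_le _ _)
    _ ≤ (norm3 (m₁ - m₂) * fnorm G₁) * fnorm D
        + fnorm G₁ * (norm3 (m₁ - m₂) * fnorm D) + fnorm D ^ 2 := by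
        have : |dot3 (rowMul m₂ D) (rowMul m₂ D)| = dot3 (rowMul m₂ D) (rowMul m₂ D) :=
          abs_of_nonneg h3nn
        rw [this]
        gcongr
    _ = 2 * fnorm G₁ * norm3 (m₁ - m₂) * fnorm D + fnorm D ^ 2 := by ring
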